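/- arXiv:2102.00530 — 2 statements merged into one kernel-verified Lean document; each statement's English description precedes it below -/
import Mathlib

section
/- There exists a constant C > 0 such that for all positive integers k and ℓ, |P_{k,ℓ} - (1 - e^{-ℓ}·∑_{ν=0}^{ℓ} ℓ^ν/ν!)| ≤ C·ℓ²/k. -/
open Finset Real

noncomputable def P (k l : ℕ) : ℝ :=
  ((l : ℝ) / (l + k)) ^ (k + l) *
    ∑ ν ∈ Finset.range k, (Nat.choose (k + l) ν : ℝ) * ((k : ℝ) / l) ^ ν

lemma P_eq (k l : ℕ) (hk : 1 ≤ k) (hl : 1 ≤ l) :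
    P k l = 1 - ∑ μ ∈ range (l + 1),
      ((k + l).choose μ : ℝ) * ((l:ℝ)/((k:ℝ) + l))^μ * ((k:ℝ)/((k:ℝ) + l))^(k + l - μ) := by
  have hkR : (0:ℝ) < k := by exact_mod_cast hk
  have hlR : (0:ℝ) < l := by exact_mod_cast hl
  have hnR : (0:ℝ) < (k:ℝ) + l := by linarith
  set g : ℕ → ℝ := fun ν =>
    ((k + l).choose ν : ℝ) * ((k:ℝ)/((k:ℝ) + l))^ν * ((l:ℝ)/((k:ℝ) + l))^(k + l - ν) with hg
  have step1 : P k l = ∑ ν ∈ range k, g ν := by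
    rw [P, Finset.mul_sum]
    refine Finset.sum_congr rfl fun ν hν => ?_
    rw [Finset.mem_range] at hν
    have e2 : (l:ℝ)^(k + l - ν) * (l:ℝ)^ν = (l:ℝ)^(k+l) := by
      rw [← pow_add]; congr 1; omega
    have e3 : ((k:ℝ)+l)^ν * ((k:ℝ)+l)^(k + l - ν) = ((k:ℝ)+l)^(k+l) := by
      rw [← pow_add]; congr 1; omega
    have hlk : (l:ℝ) + k = (k:ℝ) + l := by ring
    have key : ((l:ℝ) / ((k:ℝ) + l)) ^ (k + l) * ((k:ℝ)/l)^ν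
        = ((k:ℝ)/((k:ℝ)+l))^ν * ((l:ℝ)/((k:ℝ)+l))^(k+l-ν) := by
      rw [div_pow, div_pow, div_pow, div_pow, div_mul_div_comm, div_mul_div_comm,
        div_eq_div_iff (by positivity) (by positivity), e3]
      linear_combination (-(k:ℝ)^ν * ((k:ℝ)+l)^(k+l)) * e2
    calc ((l:ℝ) / ((l:ℝ) + k)) ^ (k + l) * (((k + l).choose ν : ℝ) * ((k:ℝ)/l)^ν)
        = ((k + l).choose ν : ℝ) * (((l:ℝ) / ((k:ℝ) + l)) ^ (k + l) * ((k:ℝ)/l)^ν) := by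
          rw [hlk]; ring
      _ = g ν := by rw [key, hg]; ring
  have step2 : ∑ ν ∈ range (k + l + 1), g ν = 1 := by
    have h1 : ((k:ℝ)/((k:ℝ)+l) + (l:ℝ)/((k:ℝ)+l)) = 1 := by field_simp
    have h2 := add_pow ((k:ℝ)/((k:ℝ)+l)) ((l:ℝ)/((k:ℝ)+l)) (k + l)
    rw [h1, one_pow] at h2
    have h3 : ∑ ν ∈ range (k + l + 1), g ν = ∑ ν ∈ range (k + l + 1),
        ((k:ℝ)/((k:ℝ)+l))^ν * ((l:ℝ)/((k:ℝ)+l))^(k+l-ν) * ((k+l).choose ν : ℝ) :=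
      Finset.sum_congr rfl fun ν _ => by rw [hg]; ring
    rw [h3, ← h2]
  have step3 : ∑ ν ∈ range (k + l + 1), g ν
      = (∑ ν ∈ range k, g ν) + ∑ i ∈ range (l + 1), g (k + i) := by
    have : k + l + 1 = k + (l + 1) := by omega
    rw [this, Finset.sum_range_add]
  have step4 : ∑ i ∈ range (l + 1), g (k + i)
      = ∑ μ ∈ range (l + 1),
        ((k + l).choose μ : ℝ) * ((l:ℝ)/((k:ℝ) + l))^μ * ((k:ℝ)/((k:ℝ) + l))^(k + l - μ) := by
    rw [← Finset.sum_range_reflect (fun i => g (k + i)) (l + 1)]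
    refine Finset.sum_congr rfl fun j hj => ?_
    rw [Finset.mem_range] at hj
    have hj' : j ≤ l := by omega
    have h1 : k + (l + 1 - 1 - j) = k + l - j := by omega
    have h2 : k + l - (k + l - j) = j := by omega
    have h3 : (k+l).choose (k + l - j) = (k+l).choose j := Nat.choose_symm (by omega)
    simp only [hg, h1, h2, h3]
    ring
  rw [step1]
  rw [step3, step4] at step2
  linarith [step2]



lemma descFact_real (n μ : ℕ) : (n.descFactorial μ : ℝ) = ∏ i ∈ range μ, ((n:ℝ) - i) := by
  rw [Nat.descFactorial_eq_prod_range]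
  push_cast [Finset.prod_range_natCast_sub]
  norm_num

lemma weier (f : ℕ → ℝ) (m : ℕ) (hf0 : ∀ i < m, 0 ≤ f i) (hf1 : ∀ i < m, f i ≤ 1) :
    1 - ∑ i ∈ range m, f i ≤ ∏ i ∈ range m, (1 - f i) := by
  induction m with
  | zero => simp
  | succ m ih =>
    have hf0' : ∀ i < m, 0 ≤ f i := fun i hi => hf0 i (by omega)
    have hf1' : ∀ i < m, f i ≤ 1 := fun i hi => hf1 i (by omega)
    rw [Finset.sum_range_succ, Finset.prod_range_succ]
    have h1 : (1 - ∑ i ∈ range m, f i) * (1 - f m) ≤ (∏ i ∈ range m, (1 - f i)) * (1 - f m) :=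
      mul_le_mul_of_nonneg_right (ih hf0' hf1') (by linarith [hf1 m (by omega)])
    have h2 : 0 ≤ (∑ i ∈ range m, f i) * f m :=
      mul_nonneg (Finset.sum_nonneg fun i hi => hf0' i (Finset.mem_range.1 hi)) (hf0 m (by omega))
    nlinarith [h1, h2]

section bounds
variable (k l μ : ℕ)

-- upper bound on choose * q^μ
lemma c1 (hk : 1 ≤ k) (hl : 1 ≤ l) :
    ((k + l).choose μ : ℝ) * ((l:ℝ)/((k:ℝ) + l))^μ ≤ (l:ℝ)^μ / (μ.factorial : ℝ) := by
  have hkR : (0:ℝ) < k := by exact_mod_cast hk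
  have hlR : (0:ℝ) < l := by exact_mod_cast hl
  have hN : (0:ℝ) < (k:ℝ) + l := by linarith
  have hfac : (0:ℝ) < (μ.factorial : ℝ) := by exact_mod_cast μ.factorial_pos
  have hcd : ((k+l).choose μ : ℝ) = (((k+l).descFactorial μ :ℕ):ℝ) / (μ.factorial : ℝ) := by
    rw [Nat.descFactorial_eq_factorial_mul_choose]
    push_cast
    field_simp
  have hd : (((k+l).descFactorial μ : ℕ) : ℝ) ≤ ((k:ℝ)+l)^μ := by
    have := Nat.descFactorial_le_pow (k+l) μ
    exact_mod_cast this
  rw [hcd, div_pow]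
  rw [div_mul_div_comm]
  rw [div_le_div_iff₀ (by positivity) hfac]
  calc (((k+l).descFactorial μ : ℕ) : ℝ) * (l:ℝ)^μ * (μ.factorial : ℝ)
      ≤ ((k:ℝ)+l)^μ * (l:ℝ)^μ * (μ.factorial : ℝ) := by
        have : (0:ℝ) ≤ (l:ℝ)^μ * (μ.factorial : ℝ) := by positivity
        nlinarith [hd, this]
    _ = (l:ℝ)^μ * ((μ.factorial : ℝ) * ((k:ℝ)+l)^μ) := by ring
end bounds

section bounds2
variable (k l μ : ℕ)

lemma c2 (hk : 1 ≤ k) (hl : 1 ≤ l) (hμ : μ ≤ l) :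
    ((k:ℝ)/((k:ℝ) + l))^(k + l - μ) ≤ Real.exp (-(l:ℝ) + (l:ℝ)^2/k) := by
  have hkR : (0:ℝ) < k := by exact_mod_cast hk
  have hlR : (0:ℝ) < l := by exact_mod_cast hl
  have hμR : (μ:ℝ) ≤ l := by exact_mod_cast hμ
  have hN : (0:ℝ) < (k:ℝ) + l := by linarith
  have h1 : (k:ℝ)/((k:ℝ)+l) ≤ Real.exp (-((l:ℝ)/((k:ℝ)+l))) := by
    have := Real.add_one_le_exp (-((l:ℝ)/((k:ℝ)+l)))
    have h2 : (k:ℝ)/((k:ℝ)+l) = -((l:ℝ)/((k:ℝ)+l)) + 1 := by field_simp; ring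
    linarith [this, h2.le]
  have h0 : (0:ℝ) ≤ (k:ℝ)/((k:ℝ)+l) := by positivity
  calc ((k:ℝ)/((k:ℝ) + l))^(k + l - μ)
      ≤ (Real.exp (-((l:ℝ)/((k:ℝ)+l))))^(k + l - μ) := pow_le_pow_left₀ h0 h1 _
    _ = Real.exp (((k + l - μ : ℕ):ℝ) * (-((l:ℝ)/((k:ℝ)+l)))) := by
        rw [Real.exp_nat_mul]
    _ ≤ Real.exp (-(l:ℝ) + (l:ℝ)^2/k) := by
        apply Real.exp_le_exp.2
        have hc : ((k + l - μ : ℕ):ℝ) = (k:ℝ) + l - μ := by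
          have : μ ≤ k + l := by omega
          push_cast [Nat.cast_sub this]
          ring
        rw [hc]
        have key : ((k:ℝ) + l - μ) * (-((l:ℝ)/((k:ℝ)+l))) = -(l:ℝ) + (l:ℝ)*μ/((k:ℝ)+l) := by
          field_simp
          ring
        rw [key]
        have : (l:ℝ)*μ/((k:ℝ)+l) ≤ (l:ℝ)^2/k := by
          apply div_le_div₀ (by positivity) (by nlinarith) hkR (by linarith)
        linarith
end bounds2

section bounds3
variable (k l μ : ℕ)

lemma c3 (hk : 1 ≤ k) (hl : 1 ≤ l) (hμ : μ ≤ l) :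
    ((l:ℝ)^μ / (μ.factorial : ℝ)) * (1 - (l:ℝ)^2/k) ≤
      ((k + l).choose μ : ℝ) * ((l:ℝ)/((k:ℝ) + l))^μ := by
  have hkR : (0:ℝ) < k := by exact_mod_cast hk
  have hlR : (0:ℝ) < l := by exact_mod_cast hl
  have hμR : (μ:ℝ) ≤ l := by exact_mod_cast hμ
  have hN : (0:ℝ) < (k:ℝ) + l := by linarith
  have hNc : ((k + l : ℕ) : ℝ) = (k:ℝ) + l := by push_cast; ring
  have hfac : (0:ℝ) < (μ.factorial : ℝ) := by exact_mod_cast μ.factorial_pos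
  have hcd : ((k+l).choose μ : ℝ) = (((k+l).descFactorial μ :ℕ):ℝ) / (μ.factorial : ℝ) := by
    rw [Nat.descFactorial_eq_factorial_mul_choose]
    push_cast
    field_simp
  -- descFactorial ≥ N^μ * (1 - l²/k)
  have hprod : (((k+l).descFactorial μ : ℕ) : ℝ) = ((k:ℝ)+l)^μ * ∏ i ∈ range μ, (1 - (i:ℝ)/((k:ℝ)+l)) := by
    rw [descFact_real, hNc,
      show ((k:ℝ)+l)^μ = ∏ _i ∈ range μ, ((k:ℝ)+l) from by rw [Finset.prod_const, card_range],
      ← Finset.prod_mul_distrib]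
    refine Finset.prod_congr rfl fun i hi => ?_
    field_simp
  have hwe : 1 - ∑ i ∈ range μ, (i:ℝ)/((k:ℝ)+l) ≤ ∏ i ∈ range μ, (1 - (i:ℝ)/((k:ℝ)+l)) := by
    apply weier
    · intro i hi; positivity
    · intro i hi
      have hiR : (i:ℝ) < l := by exact_mod_cast lt_of_lt_of_le hi hμ
      rw [div_le_one hN]; linarith
  have hsum : ∑ i ∈ range μ, (i:ℝ)/((k:ℝ)+l) ≤ (l:ℝ)^2/k := by
    calc ∑ i ∈ range μ, (i:ℝ)/((k:ℝ)+l) ≤ ∑ i ∈ range μ, (l:ℝ)/((k:ℝ)+l) := by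
          refine Finset.sum_le_sum fun i hi => ?_
          have hiR : (i:ℝ) ≤ l := by
            have := Finset.mem_range.1 hi
            have : (i:ℝ) < μ := by exact_mod_cast this
            linarith
          gcongr
      _ = (μ:ℝ) * ((l:ℝ)/((k:ℝ)+l)) := by rw [Finset.sum_const, card_range]; ring
      _ ≤ (l:ℝ)^2/k := by
          rw [mul_div_assoc']
          apply div_le_div₀ (by positivity) (by nlinarith) hkR (by linarith)
  have hpow : (0:ℝ) < ((k:ℝ)+l)^μ := by positivity
  have step : ((k:ℝ)+l)^μ * (1 - (l:ℝ)^2/k) ≤ (((k+l).descFactorial μ : ℕ) : ℝ) := by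
    rw [hprod]
    apply mul_le_mul_of_nonneg_left _ (le_of_lt hpow)
    exact le_trans (by linarith) hwe
  rw [hcd, div_pow, div_mul_div_comm, le_div_iff₀ (by positivity)]
  calc (l:ℝ)^μ / (μ.factorial:ℝ) * (1 - (l:ℝ)^2/k) * ((μ.factorial:ℝ) * ((k:ℝ)+l)^μ)
      = (l:ℝ)^μ * (((k:ℝ)+l)^μ * (1 - (l:ℝ)^2/k)) := by field_simp
    _ ≤ (l:ℝ)^μ * (((k+l).descFactorial μ : ℕ) : ℝ) := by
        apply mul_le_mul_of_nonneg_left step (by positivity)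
    _ = (((k+l).descFactorial μ : ℕ) : ℝ) * (l:ℝ)^μ := by ring
end bounds3

section bounds4
variable (k l μ : ℕ)

lemma c4 (hk : 1 ≤ k) (hl : 1 ≤ l) (hμ : μ ≤ l) :
    Real.exp (-(l:ℝ) - (l:ℝ)^2/k) ≤ ((k:ℝ)/((k:ℝ) + l))^(k + l - μ) := by
  have hkR : (0:ℝ) < k := by exact_mod_cast hk
  have hlR : (0:ℝ) < l := by exact_mod_cast hl
  have hN : (0:ℝ) < (k:ℝ) + l := by linarith
  have hq0 : (0:ℝ) < (k:ℝ)/((k:ℝ)+l) := by positivity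
  have hq1 : (k:ℝ)/((k:ℝ)+l) ≤ 1 := by rw [div_le_one hN]; linarith
  -- k/N ≥ exp(-l/k)
  have hlog : Real.log (((k:ℝ)+l)/k) ≤ (l:ℝ)/k := by
    have := Real.log_le_sub_one_of_pos (show (0:ℝ) < ((k:ℝ)+l)/k by positivity)
    have h2 : ((k:ℝ)+l)/k - 1 = (l:ℝ)/k := by field_simp; ring
    linarith
  have hexp : Real.exp (-((l:ℝ)/k)) ≤ (k:ℝ)/((k:ℝ)+l) := by
    rw [← Real.exp_log hq0]
    apply Real.exp_le_exp.2
    have : Real.log ((k:ℝ)/((k:ℝ)+l)) = - Real.log (((k:ℝ)+l)/k) := by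
      rw [← Real.log_inv]
      congr 1
      rw [inv_div]
    rw [this]
    linarith
  calc Real.exp (-(l:ℝ) - (l:ℝ)^2/k)
      = Real.exp (-((l:ℝ)/k)) ^ (k + l) := by
        rw [← Real.exp_nat_mul]
        congr 1
        push_cast
        field_simp
        ring
    _ ≤ ((k:ℝ)/((k:ℝ)+l)) ^ (k + l) := pow_le_pow_left₀ (le_of_lt (Real.exp_pos _)) hexp _
    _ ≤ ((k:ℝ)/((k:ℝ)+l)) ^ (k + l - μ) := pow_le_pow_of_le_one (le_of_lt hq0) hq1 (by omega)
end bounds4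

lemma term_bound (k l μ : ℕ) (hk : 1 ≤ k) (hl : 1 ≤ l) (hμ : μ ≤ l) (hx : (l:ℝ)^2/k ≤ 1) :
    |Real.exp (-(l:ℝ)) * ((l:ℝ)^μ / (μ.factorial : ℝ)) -
      ((k + l).choose μ : ℝ) * ((l:ℝ)/((k:ℝ) + l))^μ * ((k:ℝ)/((k:ℝ) + l))^(k + l - μ)|
    ≤ 3 * ((l:ℝ)^2/k) * (Real.exp (-(l:ℝ)) * ((l:ℝ)^μ / (μ.factorial : ℝ))) := by
  have hkR : (0:ℝ) < k := by exact_mod_cast hk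
  have hlR : (0:ℝ) < l := by exact_mod_cast hl
  have hN : (0:ℝ) < (k:ℝ) + l := by linarith
  set x : ℝ := (l:ℝ)^2/k with hxdef
  have hx0 : 0 ≤ x := by positivity
  set p : ℝ := Real.exp (-(l:ℝ)) * ((l:ℝ)^μ / (μ.factorial : ℝ)) with hp
  have hp0 : 0 ≤ p := by positivity
  set b : ℝ := ((k + l).choose μ : ℝ) * ((l:ℝ)/((k:ℝ) + l))^μ * ((k:ℝ)/((k:ℝ) + l))^(k + l - μ)
    with hb
  have hub : b ≤ p * Real.exp x := by
    have h1 := c1 k l μ hk hl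
    have h2 := c2 k l μ hk hl hμ
    have h3 : (0:ℝ) ≤ ((k + l).choose μ : ℝ) * ((l:ℝ)/((k:ℝ) + l))^μ := by positivity
    have := mul_le_mul h1 h2 (by positivity) (by positivity)
    rw [hb, hp]
    calc ((k + l).choose μ : ℝ) * ((l:ℝ)/((k:ℝ) + l))^μ * ((k:ℝ)/((k:ℝ) + l))^(k + l - μ)
        ≤ ((l:ℝ)^μ / (μ.factorial : ℝ)) * Real.exp (-(l:ℝ) + x) := this
      _ = Real.exp (-(l:ℝ)) * ((l:ℝ)^μ / (μ.factorial : ℝ)) * Real.exp x := by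
          rw [Real.exp_add]; ring
  have hlb : p * (1 - x) * Real.exp (-x) ≤ b := by
    have h1 := c3 k l μ hk hl hμ
    have h2 := c4 k l μ hk hl hμ
    have := mul_le_mul h1 h2 (le_of_lt (Real.exp_pos _)) (by positivity)
    rw [hb, hp]
    calc Real.exp (-(l:ℝ)) * ((l:ℝ)^μ / (μ.factorial : ℝ)) * (1 - x) * Real.exp (-x)
        = ((l:ℝ)^μ / (μ.factorial : ℝ)) * (1 - x) * Real.exp (-(l:ℝ) - x) := by
          rw [show -(l:ℝ) - x = -(l:ℝ) + -x from by ring, Real.exp_add]; ring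
      _ ≤ ((k + l).choose μ : ℝ) * ((l:ℝ)/((k:ℝ) + l))^μ * ((k:ℝ)/((k:ℝ) + l))^(k + l - μ) := this
  rw [abs_le]
  have hE1 : Real.exp (-x) ≤ 1 := Real.exp_le_one_iff.2 (by linarith)
  have hE2 : 1 - x ≤ Real.exp (-x) := by linarith [Real.add_one_le_exp (-x)]
  have hE0 : 0 ≤ Real.exp (-x) := le_of_lt (Real.exp_pos _)
  have hex : Real.exp x ≤ 3 := by
    calc Real.exp x ≤ Real.exp 1 := Real.exp_le_exp.2 hx
      _ ≤ 3 := by linarith [Real.exp_one_lt_d9]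
  have hex1 : 1 ≤ Real.exp x := Real.one_le_exp hx0
  constructor
  · -- b - p ≤ 3 x p  i.e.  -(3xp) ≤ p - b
    have h4 : b - p ≤ p * (Real.exp x - 1) := by nlinarith [hub]
    have hmul : Real.exp x * Real.exp (-x) = 1 := by
      rw [← Real.exp_add]; simp
    have h5 : (1 - x) * Real.exp x ≤ 1 := by
      calc (1 - x) * Real.exp x ≤ Real.exp (-x) * Real.exp x :=
            mul_le_mul_of_nonneg_right hE2 (le_of_lt (Real.exp_pos _))
        _ = 1 := by rw [mul_comm]; exact hmul
    have h6 : Real.exp x - 1 ≤ 3 * x := by nlinarith [mul_le_mul_of_nonneg_left hex hx0]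
    nlinarith [mul_le_mul_of_nonneg_left h6 hp0]
  · -- p - b ≤ 3 x p
    have key : 1 - (1 - x) * Real.exp (-x) ≤ 2 * x := by
      nlinarith [mul_nonneg hx0 (sub_nonneg.2 hE1)]
    nlinarith [hlb, mul_nonneg hp0 hx0, mul_le_mul_of_nonneg_left key hp0]


theorem P_complement_poisson_approx :
    ∃ C > 0, ∀ k l : ℕ, 1 ≤ k → 1 ≤ l →
      |P k l - (1 - Real.exp (-(l : ℝ)) *
          ∑ ν ∈ Finset.range (l + 1), (l : ℝ) ^ ν / Nat.factorial ν)| ≤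
        C * l ^ 2 / k := by
  refine ⟨3, by norm_num, fun k l hk hl => ?_⟩
  have hkR : (0:ℝ) < k := by exact_mod_cast hk
  have hlR : (0:ℝ) < l := by exact_mod_cast hl
  set pf : ℕ → ℝ := fun ν => Real.exp (-(l:ℝ)) * ((l:ℝ)^ν / (ν.factorial : ℝ)) with hpf
  set bf : ℕ → ℝ := fun ν =>
    ((k + l).choose ν : ℝ) * ((l:ℝ)/((k:ℝ) + l))^ν * ((k:ℝ)/((k:ℝ) + l))^(k + l - ν) with hbf
  have hPeq := P_eq k l hk hl
  have habs : P k l - (1 - Real.exp (-(l : ℝ)) *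
      ∑ ν ∈ Finset.range (l + 1), (l : ℝ) ^ ν / Nat.factorial ν)
      = ∑ ν ∈ range (l + 1), (pf ν - bf ν) := by
    have h1 : Real.exp (-(l:ℝ)) * ∑ ν ∈ Finset.range (l+1), (l:ℝ)^ν / (ν.factorial : ℝ)
        = ∑ ν ∈ range (l + 1), pf ν := by rw [hpf, Finset.mul_sum]
    rw [hPeq, Finset.sum_sub_distrib, h1]
    simp only [hbf]
    ring
  rw [habs]
  have hp0 : ∀ ν, 0 ≤ pf ν := fun ν => by rw [hpf]; positivity
  have hsump : ∑ ν ∈ range (l + 1), pf ν ≤ 1 := by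
    rw [hpf, ← Finset.mul_sum]
    calc Real.exp (-(l:ℝ)) * ∑ ν ∈ range (l + 1), ((l:ℝ)^ν / (ν.factorial : ℝ))
        ≤ Real.exp (-(l:ℝ)) * Real.exp (l:ℝ) :=
          mul_le_mul_of_nonneg_left (Real.sum_le_exp_of_nonneg hlR.le (l+1))
            (le_of_lt (Real.exp_pos _))
      _ = 1 := by rw [← Real.exp_add]; simp
  have hsump0 : 0 ≤ ∑ ν ∈ range (l + 1), pf ν := Finset.sum_nonneg fun ν _ => hp0 ν
  have hb0 : ∀ ν, 0 ≤ bf ν := fun ν => by rw [hbf]; positivity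
  have hsumb0 : 0 ≤ ∑ ν ∈ range (l + 1), bf ν := Finset.sum_nonneg fun ν _ => hb0 ν
  have hP0 : 0 ≤ P k l := by
    rw [P]
    positivity
  have hsumb1 : ∑ ν ∈ range (l + 1), bf ν ≤ 1 := by
    rw [hbf]
    linarith [hPeq, hP0]
  have h3x : (3:ℝ) * l ^ 2 / k = 3 * ((l:ℝ)^2/k) := by ring
  rcases le_or_gt ((l:ℝ)^2/k) 1 with hx | hx
  · calc |∑ ν ∈ range (l + 1), (pf ν - bf ν)| ≤ ∑ ν ∈ range (l + 1), |pf ν - bf ν| :=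
          Finset.abs_sum_le_sum_abs _ _
      _ ≤ ∑ ν ∈ range (l + 1), 3 * ((l:ℝ)^2/k) * pf ν := by
          refine Finset.sum_le_sum fun ν hν => ?_
          have hν' : ν ≤ l := Nat.lt_succ_iff.1 (Finset.mem_range.1 hν)
          exact term_bound k l ν hk hl hν' hx
      _ = 3 * ((l:ℝ)^2/k) * ∑ ν ∈ range (l + 1), pf ν := by rw [← Finset.mul_sum]
      _ ≤ 3 * ((l:ℝ)^2/k) * 1 := by
          apply mul_le_mul_of_nonneg_left hsump (by positivity)
      _ = 3 * (l:ℝ) ^ 2 / (k:ℝ) := by ring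
  · rw [Finset.sum_sub_distrib, abs_le]
    constructor
    · rw [h3x]; linarith
    · rw [h3x]; linarith
end

section
/- For every positive integer k, lim_{ℓ→∞} P_{k,ℓ} ≥ 1/2 - 1/√(2πk). -/
open Filter Real

section Aux
open Nat MeasureTheory intervalIntegral

lemma hasDeriv_H (k : ℕ) (x : ℝ) :
    HasDerivAt (fun x : ℝ => ∑ ν ∈ Finset.range (k+1), Real.exp (-x) * x ^ ν / ν !)
      (-(Real.exp (-x) * x ^ k / k !)) x := by
  have hterm : ∀ ν ∈ Finset.range (k+1), HasDerivAt (fun x : ℝ => Real.exp (-x) * x ^ ν / ν !)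
      ((Real.exp (-x) * (-1) * x ^ ν + Real.exp (-x) * ((ν:ℝ) * x ^ (ν-1))) / ν !) x := by
    intro ν _
    exact (((hasDerivAt_id x).neg.exp).mul (hasDerivAt_pow ν x)).div_const _
  have := HasDerivAt.fun_sum hterm
  refine this.congr_deriv ?_
  rw [eq_comm, Finset.sum_congr rfl (fun ν _ => by ring :
    ∀ ν ∈ Finset.range (k+1), (Real.exp (-x) * (-1) * x ^ ν + Real.exp (-x) * ((ν:ℝ) * x ^ (ν-1))) / ν !
      = Real.exp (-x) * ((ν:ℝ) * x ^ (ν-1) / ν !) - Real.exp (-x) * (x ^ ν / ν !))]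
  rw [Finset.sum_sub_distrib]
  have h1 : ∑ ν ∈ Finset.range (k+1), Real.exp (-x) * ((ν:ℝ) * x ^ (ν-1) / ν !)
      = ∑ j ∈ Finset.range k, Real.exp (-x) * (x ^ j / j !) := by
    rw [Finset.sum_range_succ' (fun ν => Real.exp (-x) * ((ν:ℝ) * x ^ (ν-1) / ν !))]
    simp only [Nat.cast_zero, zero_mul, mul_zero, zero_div, add_zero]
    apply Finset.sum_congr rfl
    intro i _
    congr 1
    rw [Nat.factorial_succ]
    push_cast
    field_simp
  rw [h1, Finset.sum_range_succ (fun ν => Real.exp (-x) * (x ^ ν / ν !))]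
  ring

lemma f_cont (k : ℕ) : Continuous (fun t : ℝ => Real.exp (-t) * t ^ k) := by fun_prop

lemma ftc_eq (k : ℕ) :
    ∫ t in (0:ℝ)..(k:ℝ), Real.exp (-t) * t ^ k
      = (k ! : ℝ) * (1 - Real.exp (-(k:ℝ)) * ∑ ν ∈ Finset.range (k+1), (k:ℝ) ^ ν / ν !) := by
  have key := intervalIntegral.integral_eq_sub_of_hasDerivAt
    (f := fun x : ℝ => -((k ! : ℝ) * ∑ ν ∈ Finset.range (k+1), Real.exp (-x) * x ^ ν / ν !))
    (f' := fun t : ℝ => Real.exp (-t) * t ^ k) (a := 0) (b := (k:ℝ))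
    (fun x _ => by
      have := ((hasDeriv_H k x).const_mul (k ! : ℝ)).neg
      convert this using 1
      · rfl
      have hne : (k ! : ℝ) ≠ 0 := Nat.cast_ne_zero.mpr (Nat.factorial_ne_zero k)
      field_simp)
    ((f_cont k).intervalIntegrable _ _)
  rw [key]
  simp only [neg_zero, Real.exp_zero, one_mul]
  have h0 : ∑ ν ∈ Finset.range (k+1), (0:ℝ) ^ ν / ν ! = 1 := by
    rw [Finset.sum_eq_single 0]
    · simp
    · intro b _ hb
      simp [zero_pow hb]
    · simp
  rw [h0]
  have h2 : ∑ ν ∈ Finset.range (k+1), Real.exp (-(k:ℝ)) * (k:ℝ) ^ ν / ν !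
      = Real.exp (-(k:ℝ)) * ∑ ν ∈ Finset.range (k+1), (k:ℝ) ^ ν / ν ! := by
    rw [Finset.mul_sum]; apply Finset.sum_congr rfl; intro ν _; ring
  rw [h2]; ring

lemma scalar_ineq {u : ℝ} (hu : 0 ≤ u) : (1 - u) * Real.exp u ≤ (1 + u) * Real.exp (-u) := by
  have key : MonotoneOn (fun u : ℝ => (1 + u) * Real.exp (-u) - (1 - u) * Real.exp u) (Set.Ici 0) := by
    apply monotoneOn_of_deriv_nonneg (convex_Ici 0)
    · fun_prop
    · fun_prop
    · intro x hx
      rw [interior_Ici] at hx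
      have hx' : (0:ℝ) ≤ x := le_of_lt hx
      have hd : HasDerivAt (fun u : ℝ => (1 + u) * Real.exp (-u) - (1 - u) * Real.exp u)
          (x * Real.exp x - x * Real.exp (-x)) x := by
        have h1 : HasDerivAt (fun u : ℝ => (1 + u) * Real.exp (-u))
            (1 * Real.exp (-x) + (1 + x) * (Real.exp (-x) * (-1))) x :=
          ((hasDerivAt_id x).const_add 1).mul ((hasDerivAt_id x).neg.exp)
        have h2 : HasDerivAt (fun u : ℝ => (1 - u) * Real.exp u)
            ((0 - 1) * Real.exp x + (1 - x) * Real.exp x) x :=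
          ((hasDerivAt_const x (1:ℝ)).sub (hasDerivAt_id x)).mul (Real.hasDerivAt_exp x)
        refine (h1.fun_sub h2).congr_deriv ?_
        ring
      rw [hd.deriv]
      have : Real.exp (-x) ≤ Real.exp x := Real.exp_le_exp.mpr (by linarith)
      nlinarith
  have h0 := key Set.self_mem_Ici (Set.mem_Ici.mpr hu) hu
  simp only [neg_zero, Real.exp_zero] at h0
  linarith

lemma compare_int (k : ℕ) (hk : 1 ≤ k) :
    ∫ t in (0:ℝ)..(k:ℝ), Real.exp (-t) * t ^ k
      ≤ ∫ t in (k:ℝ)..(2*k:ℝ), Real.exp (-t) * t ^ k := by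
  have hkpos : (0:ℝ) < (k:ℝ) := by exact_mod_cast hk
  have hL : ∫ t in (0:ℝ)..(k:ℝ), Real.exp (-t) * t ^ k
      = ∫ s in (0:ℝ)..(k:ℝ), Real.exp (-((k:ℝ) - s)) * ((k:ℝ) - s) ^ k := by
    rw [intervalIntegral.integral_comp_sub_left (fun t => Real.exp (-t) * t ^ k) (k:ℝ)]
    norm_num
  have hR : ∫ t in (k:ℝ)..(2*k:ℝ), Real.exp (-t) * t ^ k
      = ∫ s in (0:ℝ)..(k:ℝ), Real.exp (-((k:ℝ) + s)) * ((k:ℝ) + s) ^ k := by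
    rw [intervalIntegral.integral_comp_add_left (fun t => Real.exp (-t) * t ^ k) (k:ℝ)]
    norm_num [two_mul]
  rw [hL, hR]
  apply intervalIntegral.integral_mono_on (le_of_lt hkpos)
  · exact (by fun_prop : Continuous fun s : ℝ => Real.exp (-((k:ℝ) - s)) * ((k:ℝ) - s) ^ k).intervalIntegrable _ _
  · exact (by fun_prop : Continuous fun s : ℝ => Real.exp (-((k:ℝ) + s)) * ((k:ℝ) + s) ^ k).intervalIntegrable _ _
  · intro s hs
    obtain ⟨hs0, hsk⟩ := hs
    have hu0 : 0 ≤ s / (k:ℝ) := div_nonneg hs0 (le_of_lt hkpos)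
    have hu1 : s / (k:ℝ) ≤ 1 := (div_le_one hkpos).mpr hsk
    have hscalar := scalar_ineq hu0
    have h1 : 0 ≤ (1 - s/(k:ℝ)) * Real.exp (s/(k:ℝ)) :=
      mul_nonneg (by linarith) (Real.exp_pos _).le
    have hpow : ((1 - s/(k:ℝ)) * Real.exp (s/(k:ℝ))) ^ k ≤ ((1 + s/(k:ℝ)) * Real.exp (-(s/(k:ℝ)))) ^ k :=
      pow_le_pow_left₀ h1 hscalar k
    have hk1 : (k:ℝ) - s = (k:ℝ) * (1 - s/(k:ℝ)) := by field_simp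
    have hk2 : (k:ℝ) + s = (k:ℝ) * (1 + s/(k:ℝ)) := by field_simp
    have he1 : Real.exp s = (Real.exp (s/(k:ℝ))) ^ k := by
      rw [← Real.exp_nat_mul]
      congr 1
      field_simp
      try ring
    have he2 : Real.exp (-s) = (Real.exp (-(s/(k:ℝ)))) ^ k := by
      rw [← Real.exp_nat_mul]
      congr 1
      field_simp
      try ring
    have expand1 : Real.exp (-((k:ℝ) - s)) * ((k:ℝ) - s) ^ k
        = Real.exp (-(k:ℝ)) * (k:ℝ) ^ k * ((1 - s/(k:ℝ)) * Real.exp (s/(k:ℝ))) ^ k := by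
      rw [hk1, show -((k:ℝ) * (1 - s/(k:ℝ))) = s + -(k:ℝ) by rw [← hk1]; ring,
        Real.exp_add, he1, mul_pow, mul_pow]
      ring
    have expand2 : Real.exp (-((k:ℝ) + s)) * ((k:ℝ) + s) ^ k
        = Real.exp (-(k:ℝ)) * (k:ℝ) ^ k * ((1 + s/(k:ℝ)) * Real.exp (-(s/(k:ℝ)))) ^ k := by
      rw [hk2, show -((k:ℝ) * (1 + s/(k:ℝ))) = -s + -(k:ℝ) by rw [← hk2]; ring,
        Real.exp_add, he2, mul_pow, mul_pow]
      ring
    rw [expand1, expand2]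
    apply mul_le_mul_of_nonneg_left hpow
    positivity

lemma gamma_int (k : ℕ) : ∫ x in Set.Ioi (0:ℝ), Real.exp (-x) * x ^ k = (k ! : ℝ) := by
  have h := Real.Gamma_eq_integral (s := (k:ℝ)+1) (by positivity)
  rw [Real.Gamma_nat_eq_factorial] at h
  rw [h]
  apply Eq.symm
  apply MeasureTheory.setIntegral_congr_fun measurableSet_Ioi
  intro x _
  simp only [show ((k:ℝ)+1) - 1 = ((k:ℕ):ℝ) by ring, Real.rpow_natCast]

lemma int_Ioi_integrable (k : ℕ) :
    MeasureTheory.IntegrableOn (fun x : ℝ => Real.exp (-x) * x ^ k) (Set.Ioi 0) := by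
  have h := Real.GammaIntegral_convergent (s := (k:ℝ)+1) (by positivity)
  apply h.congr_fun _ measurableSet_Ioi
  intro x hx
  simp only [show ((k:ℝ)+1) - 1 = ((k:ℕ):ℝ) by ring, Real.rpow_natCast]

lemma half_bound (k : ℕ) (hk : 1 ≤ k) :
    ∫ t in (0:ℝ)..(k:ℝ), Real.exp (-t) * t ^ k ≤ (k ! : ℝ) / 2 := by
  set f : ℝ → ℝ := fun x => Real.exp (-x) * x ^ k with hf
  have hkpos : (0:ℝ) < (k:ℝ) := by exact_mod_cast hk
  have h2k : (k:ℝ) ≤ 2*k := by linarith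
  have hint := int_Ioi_integrable k
  have hi1 : MeasureTheory.IntegrableOn f (Set.Ioc 0 (k:ℝ)) :=
    hint.mono_set (Set.Ioc_subset_Ioi_self)
  have hi2 : MeasureTheory.IntegrableOn f (Set.Ioc (k:ℝ) (2*k)) :=
    hint.mono_set (fun x hx => lt_trans hkpos hx.1)
  have hi3 : MeasureTheory.IntegrableOn f (Set.Ioi (2*k:ℝ)) :=
    hint.mono_set (fun x hx => lt_trans (by linarith : (0:ℝ) < 2*k) hx)
  have hsplit1 : ∫ x in Set.Ioi (0:ℝ), f x
      = (∫ x in Set.Ioc (0:ℝ) (2*k), f x) + ∫ x in Set.Ioi (2*k:ℝ), f x := by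
    rw [← MeasureTheory.setIntegral_union (Set.Ioc_disjoint_Ioi le_rfl) measurableSet_Ioi
      (hint.mono_set (Set.Ioc_subset_Ioi_self)) hi3,
      Set.Ioc_union_Ioi_eq_Ioi (by linarith : (0:ℝ) ≤ 2*k)]
  have hsplit2 : ∫ x in Set.Ioc (0:ℝ) (2*k), f x
      = (∫ x in Set.Ioc (0:ℝ) (k:ℝ), f x) + ∫ x in Set.Ioc (k:ℝ) (2*k), f x := by
    rw [← MeasureTheory.setIntegral_union (Set.Ioc_disjoint_Ioc_of_le le_rfl) measurableSet_Ioc hi1 hi2,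
      Set.Ioc_union_Ioc_eq_Ioc (le_of_lt hkpos) h2k]
  have htail : 0 ≤ ∫ x in Set.Ioi (2*k:ℝ), f x := by
    apply MeasureTheory.setIntegral_nonneg measurableSet_Ioi
    intro x hx
    have hx0 : (0:ℝ) < x := lt_trans (by positivity) (Set.mem_Ioi.mp hx)
    simp only [hf]
    positivity
  have hcmp : ∫ x in Set.Ioc (0:ℝ) (k:ℝ), f x ≤ ∫ x in Set.Ioc (k:ℝ) (2*k), f x := by
    have := compare_int k hk
    rwa [intervalIntegral.integral_of_le (le_of_lt hkpos),
      intervalIntegral.integral_of_le h2k] at this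
  have htotal : ∫ x in Set.Ioi (0:ℝ), f x = (k ! : ℝ) := gamma_int k
  rw [intervalIntegral.integral_of_le (le_of_lt hkpos)]
  have : (∫ x in Set.Ioc (0:ℝ) (k:ℝ), f x) + (∫ x in Set.Ioc (0:ℝ) (k:ℝ), f x) ≤ (k ! : ℝ) := by
    rw [← htotal, hsplit1, hsplit2]
    linarith
  linarith

lemma teicher (k : ℕ) (hk : 1 ≤ k) :
    (1:ℝ)/2 ≤ Real.exp (-(k:ℝ)) * ∑ ν ∈ Finset.range (k+1), (k:ℝ) ^ ν / ν ! := by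
  have h1 := half_bound k hk
  rw [ftc_eq k] at h1
  have hfac : (0:ℝ) < (k ! : ℝ) := by exact_mod_cast Nat.factorial_pos k
  nlinarith
lemma tendsto_base (k : ℕ) :
    Tendsto (fun l : ℕ => ((l:ℝ)/(l+k))^(k+l)) atTop (nhds (Real.exp (-(k:ℝ)))) := by
  have h1 : Tendsto (fun l : ℕ => (1 + (k:ℝ)/l)^l) atTop (nhds (Real.exp k)) :=
    Real.tendsto_one_add_div_pow_exp k
  have h2 : Tendsto (fun l : ℕ => (1 + (k:ℝ)/l)^k) atTop (nhds 1) := by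
    have := ((tendsto_const_div_atTop_nhds_zero_nat (k:ℝ)).const_add 1).pow k
    norm_num at this
    exact this
  have h3 := (h1.mul h2).inv₀ (by simp [Real.exp_ne_zero])
  rw [mul_one, ← Real.exp_neg] at h3
  apply h3.congr'
  filter_upwards [eventually_ge_atTop 1] with l hl
  have hl0 : (0:ℝ) < l := by exact_mod_cast hl
  have hb : (1 + (k:ℝ)/l) = ((l:ℝ)+k)/l := by field_simp
  rw [hb, ← pow_add, show l + k = k + l from add_comm l k, ← inv_pow, inv_div]

lemma term_tendsto (k ν : ℕ) (hν : ν < k) :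
    Tendsto (fun l : ℕ => ((k+l).choose ν : ℝ) * ((k:ℝ)/l)^ν) atTop
      (nhds ((k:ℝ)^ν / ν !)) := by
  have hprodlim : Tendsto (fun l : ℕ => ∏ i ∈ Finset.range ν, (((k:ℝ)-i)/l + 1)) atTop
      (nhds 1) := by
    have := tendsto_finset_prod
      (f := fun (i : ℕ) (l : ℕ) => ((k:ℝ)-i)/l + 1) (x := atTop) (a := fun _ => (1:ℝ))
      (Finset.range ν)
      (fun i _ => by
        have := (tendsto_const_div_atTop_nhds_zero_nat ((k:ℝ)-i)).add_const 1
        norm_num at this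
        exact this)
    simpa using this
  have hmain := tendsto_const_nhds (x := ((k:ℝ)^ν / ν !)) (f := atTop (α := ℕ)) |>.mul hprodlim
  rw [mul_one] at hmain
  apply hmain.congr'
  filter_upwards [eventually_ge_atTop 1] with l hl
  have hl0 : (0:ℝ) < l := by exact_mod_cast hl
  have hfac : (0:ℝ) < (ν ! : ℝ) := by exact_mod_cast Nat.factorial_pos ν
  have hdesc : (((k+l).descFactorial ν : ℕ) : ℝ) = (ν ! : ℝ) * ((k+l).choose ν : ℝ) := by
    exact_mod_cast congrArg (Nat.cast (R := ℝ)) (Nat.descFactorial_eq_factorial_mul_choose (k+l) ν)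
  have hprod : (((k+l).descFactorial ν : ℕ) : ℝ) = ∏ i ∈ Finset.range ν, ((k:ℝ) + l - i) := by
    rw [Nat.descFactorial_eq_prod_range, Nat.cast_prod]
    apply Finset.prod_congr rfl
    intro i hi
    have hik : i ≤ k + l := le_trans (le_of_lt (lt_trans (Finset.mem_range.mp hi) hν)) (Nat.le_add_right k l)
    rw [Nat.cast_sub hik]
    push_cast
    ring
  have hchoose : ((k+l).choose ν : ℝ) = (∏ i ∈ Finset.range ν, ((k:ℝ)+l-i)) / ν ! := by
    rw [← hprod, hdesc]
    field_simp
  have hpr2 : ∏ i ∈ Finset.range ν, (((k:ℝ)-i)/l + 1)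
      = (∏ i ∈ Finset.range ν, ((k:ℝ)+l-i)) / (l:ℝ)^ν := by
    rw [show ((l:ℝ)^ν) = ∏ _i ∈ Finset.range ν, (l:ℝ) by simp, ← Finset.prod_div_distrib]
    apply Finset.prod_congr rfl
    intro i _
    field_simp
    ring
  rw [hchoose, hpr2, div_pow]
  field_simp

lemma stirling_lb (k : ℕ) (hk : 1 ≤ k) :
    Real.sqrt π * (Real.sqrt (2*k) * ((k:ℝ)/Real.exp 1)^k) ≤ (k.factorial : ℝ) := by
  obtain ⟨m, rfl⟩ := Nat.exists_eq_add_of_le hk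
  have h1 : Real.sqrt π ≤ Stirling.stirlingSeq (1 + m) := by
    have := Stirling.stirlingSeq'_antitone.le_of_tendsto
      (Stirling.tendsto_stirlingSeq_sqrt_pi.comp (tendsto_add_atTop_nat 1)) m
    simpa [Function.comp, Nat.succ_eq_add_one, Nat.add_comm] using this
  have hpos : 0 < Real.sqrt (2*((1+m:ℕ):ℝ)) * (((1+m:ℕ):ℝ)/Real.exp 1)^(1+m) := by
    have : (0:ℝ) < ((1+m:ℕ):ℝ) := by positivity
    positivity
  rw [Stirling.stirlingSeq] at h1
  exact (le_div_iff₀ hpos).mp h1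


lemma p_le (k : ℕ) (hk : 1 ≤ k) :
    Real.exp (-(k:ℝ)) * ((k:ℝ)^k / k !) ≤ 1 / Real.sqrt (2*π*k) := by
  have hkpos : (0:ℝ) < (k:ℝ) := by exact_mod_cast hk
  have hst := stirling_lb k hk
  have hsqrt : Real.sqrt (2*π*(k:ℝ)) = Real.sqrt π * Real.sqrt (2*(k:ℝ)) := by
    rw [show (2*π*(k:ℝ)) = π * (2*(k:ℝ)) by ring, Real.sqrt_mul pi_pos.le]
  have hke : ((k:ℝ)/Real.exp 1)^k = (k:ℝ)^k * Real.exp (-(k:ℝ)) := by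
    rw [div_pow, Real.exp_one_pow, Real.exp_neg]
    ring
  rw [hke, ← mul_assoc, ← hsqrt] at hst
  have hs : (0:ℝ) < Real.sqrt (2*π*(k:ℝ)) := Real.sqrt_pos.mpr (by positivity)
  have hA : (0:ℝ) < (k:ℝ)^k * Real.exp (-(k:ℝ)) := by positivity
  have hfac : (0:ℝ) < (k ! : ℝ) := by exact_mod_cast Nat.factorial_pos k
  rw [show Real.exp (-(k:ℝ)) * ((k:ℝ)^k / k !) = ((k:ℝ)^k * Real.exp (-(k:ℝ))) / (k ! : ℝ) by ring,
    div_le_div_iff₀ hfac hs]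
  calc (k:ℝ)^k * Real.exp (-(k:ℝ)) * Real.sqrt (2*π*(k:ℝ))
      = Real.sqrt (2*π*(k:ℝ)) * ((k:ℝ)^k * Real.exp (-(k:ℝ))) := by ring
    _ ≤ (k ! : ℝ) := hst
    _ = 1 * (k ! : ℝ) := by ring

end Aux

theorem P_limit_lower_bound (k : ℕ) (hk : 1 ≤ k) :
    ∃ L : ℝ, Tendsto (fun l => P k l) atTop (nhds L) ∧
      L ≥ 1 / 2 - 1 / Real.sqrt (2 * Real.pi * k) := by
  refine ⟨Real.exp (-(k:ℝ)) * ∑ ν ∈ Finset.range k, (k:ℝ)^ν / (Nat.factorial ν : ℝ), ?_, ?_⟩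
  · have hA := tendsto_base k
    have hB := tendsto_finset_sum (Finset.range k)
      (fun ν hν => term_tendsto k ν (Finset.mem_range.mp hν))
    exact hA.mul hB
  · have ht := teicher k hk
    have hp := p_le k hk
    rw [Finset.sum_range_succ, mul_add] at ht
    have hexp : Real.exp (-(k:ℝ)) * ((k:ℝ)^k / (Nat.factorial k : ℝ))
        = Real.exp (-(k:ℝ)) * ((k:ℝ)^k / (Nat.factorial k : ℝ)) := rfl
    linarith
end
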